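/- A priori sandwich bound: Let $-2 < \beta < 0$, $c_1, c_2 \geq 0$ with $(c_1,c_2)\neq(0,0)$, $s = -1-2/\beta$, $s' = -1-3/\beta$, and let $\sigma \neq 1$ satisfy $\beta^2/4 < \sigma \leq \min\{1, -2\beta/3\}$. Then there exist constants $a, b > 0$, depending only on $\beta, c_1, c_2, \sigma$ (not on $w$), such that every positive solution $w \in C^2(0,\pi/2)\cap C[0,\pi/2]$ of $-w'' = \beta^2 w + c_1 w^{-s} + c_2\sin\phi\,w^{-s'}$ on $(0,\pi/2)$ with $w(0) = w(\pi/2) = 0$ satisfies $a\sin 2\phi \leq w(\phi) \leq b(\sin 2\phi)^\sigma$ for all $\phi \in (0,\pi/2)$. -/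

import Mathlib

/-!
For small `a`, `a sin 2φ` is a subsolution of `-w'' - β² w = c₁ w^{-s} + c₂ sin φ w^{-s'}`: the
left side is `(4 - β²) a sin 2φ`, while the right side blows up as `w → 0`. For large `b`,
`b (sin 2φ)^σ` is a supersolution: `-((sin 2φ)^σ)'' - β² (sin 2φ)^σ` equals
`σ(1-σ)(sin 2φ)^{σ-2}(2 cos 2φ)² + (4σ - β²)(sin 2φ)^σ ≥ min(σ(1-σ), 4σ - β²) (sin 2φ)^{σ-2}`,
which dominates the right side since `σ ≤ -2β/3` makes both exponents `σ(-s), σ(-s') ≥ σ - 2`.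
The right side is nonincreasing in `w`, and `-∂² - β²` obeys the maximum principle on `[0, π/2]`
because `β² < 4`, with `cos (γ (φ - π/4))`, `β² < γ² < 4`, as a positive strict supersolution.
Comparing `w` with both functions, which vanish at the endpoints too, gives the sandwich.
-/

open Real Set Filter Topology

theorem IsLocalMin.deriv_deriv_nonneg {f : ℝ → ℝ} {x : ℝ} (h : IsLocalMin f x)
    (hc : ContinuousAt f x) : 0 ≤ deriv (deriv f) x := by
  by_contra! hneg
  have hconst : f =ᶠ[𝓝 x] fun _ => f x :=
    (h.and (isLocalMax_of_deriv_deriv_neg hneg h.deriv_eq_zero hc)).mono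
      fun y hy => le_antisymm hy.2 hy.1
  have hderiv : deriv f =ᶠ[𝓝 x] fun _ => 0 :=
    hconst.eventuallyEq_nhds.mono fun y hy => by rw [hy.deriv_eq, deriv_const]
  rw [hderiv.deriv_eq, deriv_const] at hneg
  exact lt_irrefl _ hneg

theorem hasDerivAt_deriv_add_const_mul {f g : ℝ → ℝ} {x f₂ g₂ : ℝ} (c : ℝ)
    (hf : ∀ᶠ y in 𝓝 x, DifferentiableAt ℝ f y) (hg : ∀ᶠ y in 𝓝 x, DifferentiableAt ℝ g y)
    (hf₂ : HasDerivAt (deriv f) f₂ x) (hg₂ : HasDerivAt (deriv g) g₂ x) :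
    HasDerivAt (deriv fun y => f y + c * g y) (f₂ + c * g₂) x :=
  (hf₂.add (hg₂.const_mul c)).congr_of_eventuallyEq <| (hf.and hg).mono fun y hy => by
    rw [deriv_fun_add hy.1 (hy.2.const_mul c), deriv_const_mul_field']
    rfl

theorem nonneg_of_pos_supersolution {l r k m : ℝ} {d h : ℝ → ℝ} (hkm : k < m)
    (hdc : ContinuousOn d (Icc l r)) (hd₁ : ∀ x ∈ Ioo l r, DifferentiableAt ℝ d x)
    (hd₂ : ∀ x ∈ Ioo l r, DifferentiableAt ℝ (deriv d) x)
    (hd : ∀ x ∈ Ioo l r, d x < 0 → k * d x ≤ -deriv (deriv d) x)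
    (hdl : 0 ≤ d l) (hdr : 0 ≤ d r)
    (hhc : ContinuousOn h (Icc l r)) (hh₁ : ∀ x ∈ Ioo l r, DifferentiableAt ℝ h x)
    (hh₂ : ∀ x ∈ Ioo l r, DifferentiableAt ℝ (deriv h) x)
    (hh : ∀ x ∈ Ioo l r, m * h x ≤ -deriv (deriv h) x) (hpos : ∀ x ∈ Icc l r, 0 < h x) :
    ∀ x ∈ Icc l r, 0 ≤ d x := by
  intro x hx
  by_contra! hdx
  obtain ⟨z, hz, hmin⟩ := isCompact_Icc.exists_isMinOn ⟨x, hx⟩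
    (hdc.div hhc fun y hy => (hpos y hy).ne')
  have hdz : d z < 0 := by
    have : d z / h z < 0 := (hmin hx).trans_lt (div_neg_of_neg_of_pos hdx (hpos x hx))
    by_contra! hdz
    exact this.not_ge (div_nonneg hdz (hpos z hz).le)
  have hzI : z ∈ Ioo l r :=
    ⟨hz.1.lt_of_ne (by rintro rfl; linarith), hz.2.lt_of_ne (by rintro rfl; linarith)⟩
  -- With `θ = -min (d / h) > 0`, the function `d + θ h ≥ 0` vanishes at the interior point `z`.
  obtain ⟨θ, hθdef⟩ : ∃ θ, θ = -(d z / h z) := ⟨_, rfl⟩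
  have hθ : 0 < θ := hθdef ▸ neg_pos.2 (div_neg_of_neg_of_pos hdz (hpos z hz))
  have hθz : θ * h z = -d z := by rw [hθdef]; field_simp [(hpos z hz).ne']
  have hmin' : IsLocalMin (fun y => d y + θ * h y) z := by
    filter_upwards [Icc_mem_nhds hzI.1 hzI.2] with y hy
    have hy' : d z / h z * h y ≤ d y := by
      simpa only [div_mul_cancel₀ _ (hpos y hy).ne'] using
        mul_le_mul_of_nonneg_right (show d z / h z ≤ d y / h y from hmin hy) (hpos y hy).le
    rw [hθz, hθdef]
    linarith
  have hnear {f : ℝ → ℝ} (hf : ∀ x ∈ Ioo l r, DifferentiableAt ℝ f x) :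
      ∀ᶠ y in 𝓝 z, DifferentiableAt ℝ f y :=
    eventually_of_mem (isOpen_Ioo.mem_nhds hzI) hf
  have hq₂ := hasDerivAt_deriv_add_const_mul θ (hnear hd₁) (hnear hh₁)
    (hd₂ z hzI).hasDerivAt (hh₂ z hzI).hasDerivAt
  have hconv : 0 ≤ deriv (deriv d) z + θ * deriv (deriv h) z := hq₂.deriv ▸
    hmin'.deriv_deriv_nonneg ((hd₁ z hzI).add ((hh₁ z hzI).const_mul θ)).continuousAt
  have hθh := mul_le_mul_of_nonneg_left (hh z hzI) hθ.le
  have hupper : -deriv (deriv d) z ≤ m * d z := by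
    have : θ * (m * h z) = -(m * d z) := by linear_combination m * hθz
    linarith
  linarith [hd z hzI hdz, mul_pos (sub_pos.2 hkm) (neg_pos.2 hdz)]

theorem hasDerivAt_cos_mul_sub (γ c x : ℝ) :
    HasDerivAt (fun x => cos (γ * (x - c))) (-γ * sin (γ * (x - c))) x := by
  simpa [mul_comm] using (((hasDerivAt_id x).sub_const c).const_mul γ).cos

theorem hasDerivAt_sin_mul_sub (γ c x : ℝ) :
    HasDerivAt (fun x => sin (γ * (x - c))) (γ * cos (γ * (x - c))) x := by
  simpa [mul_comm] using (((hasDerivAt_id x).sub_const c).const_mul γ).sin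

theorem nonneg_of_neg_imp_le_neg_deriv_deriv {k : ℝ} (hk : k < 4) {d : ℝ → ℝ}
    (hdc : ContinuousOn d (Icc 0 (π / 2))) (hd₁ : ∀ x ∈ Ioo 0 (π / 2), DifferentiableAt ℝ d x)
    (hd₂ : ∀ x ∈ Ioo 0 (π / 2), DifferentiableAt ℝ (deriv d) x)
    (hd : ∀ x ∈ Ioo 0 (π / 2), d x < 0 → k * d x ≤ -deriv (deriv d) x)
    (h0 : 0 ≤ d 0) (hπ : 0 ≤ d (π / 2)) :
    ∀ x ∈ Icc 0 (π / 2), 0 ≤ d x := by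
  obtain ⟨m, hkm, hm⟩ := exists_between (max_lt hk four_pos)
  obtain ⟨γ, hγ0, rfl⟩ : ∃ γ, 0 ≤ γ ∧ γ ^ 2 = m :=
    ⟨√m, sqrt_nonneg m, sq_sqrt ((le_max_right k 0).trans hkm.le)⟩
  have hγ : γ < 2 := by nlinarith
  -- The weight `cos (γ (x - π/4))` solves `-h'' = γ² h` and is positive on `[0, π/2]` as `γ < 2`.
  have hderiv : deriv (fun x => cos (γ * (x - π / 4))) = fun x => -γ * sin (γ * (x - π / 4)) :=
    funext fun x => (hasDerivAt_cos_mul_sub γ (π / 4) x).deriv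
  have hderiv₂ (x : ℝ) : HasDerivAt (deriv fun x => cos (γ * (x - π / 4)))
      (-(γ ^ 2 * cos (γ * (x - π / 4)))) x := by
    rw [hderiv]
    exact ((hasDerivAt_sin_mul_sub γ (π / 4) x).const_mul (-γ)).congr_deriv (by ring)
  refine nonneg_of_pos_supersolution ((le_max_left k 0).trans_lt hkm) hdc hd₁ hd₂ hd h0 hπ
    (by fun_prop) (fun x _ => by fun_prop) (fun x _ => (hderiv₂ x).differentiableAt)
    (fun x _ => by rw [(hderiv₂ x).deriv, neg_neg]) fun x hx => cos_pos_of_mem_Ioo ?_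
  have : |γ * (x - π / 4)| < π / 2 := by
    rw [abs_mul, abs_of_nonneg hγ0]
    calc γ * |x - π / 4| ≤ γ * (π / 4) := by
          gcongr; exact abs_le.2 ⟨by linarith [hx.1], by linarith [hx.2]⟩
      _ < 2 * (π / 4) := by gcongr
      _ = π / 2 := by ring
  exact abs_lt.1 this

theorem le_of_subsolution_of_supersolution {k : ℝ} (hk : k < 4) {F : ℝ → ℝ → ℝ}
    (hF : ∀ x ∈ Ioo 0 (π / 2), AntitoneOn (F x) (Ioi 0)) {u v : ℝ → ℝ}
    (huc : ContinuousOn u (Icc 0 (π / 2))) (hu₁ : ∀ x ∈ Ioo 0 (π / 2), DifferentiableAt ℝ u x)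
    (hu₂ : ∀ x ∈ Ioo 0 (π / 2), DifferentiableAt ℝ (deriv u) x)
    (hu : ∀ x ∈ Ioo 0 (π / 2), -deriv (deriv u) x - k * u x ≤ F x (u x))
    (hvc : ContinuousOn v (Icc 0 (π / 2))) (hv₁ : ∀ x ∈ Ioo 0 (π / 2), DifferentiableAt ℝ v x)
    (hv₂ : ∀ x ∈ Ioo 0 (π / 2), DifferentiableAt ℝ (deriv v) x)
    (hv : ∀ x ∈ Ioo 0 (π / 2), F x (v x) ≤ -deriv (deriv v) x - k * v x)
    (hvpos : ∀ x ∈ Ioo 0 (π / 2), 0 < v x) (h0 : u 0 ≤ v 0) (hπ : u (π / 2) ≤ v (π / 2)) :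
    ∀ x ∈ Icc 0 (π / 2), u x ≤ v x := by
  have hd₂ (x : ℝ) (hx : x ∈ Ioo 0 (π / 2)) :=
    hasDerivAt_deriv_add_const_mul (-1) (eventually_of_mem (isOpen_Ioo.mem_nhds hx) hv₁)
      (eventually_of_mem (isOpen_Ioo.mem_nhds hx) hu₁) (hv₂ x hx).hasDerivAt (hu₂ x hx).hasDerivAt
  have hd (x : ℝ) (hx : x ∈ Ioo 0 (π / 2)) (hneg : v x + -1 * u x < 0) :
      k * (v x + -1 * u x) ≤ -deriv (deriv fun x => v x + -1 * u x) x := by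
    have hvu : v x < u x := by linarith
    rw [(hd₂ x hx).deriv]
    linarith [hu x hx, hv x hx, hF x hx (hvpos x hx) ((hvpos x hx).trans hvu) hvu.le]
  intro x hx
  linarith [nonneg_of_neg_imp_le_neg_deriv_deriv hk (d := fun x => v x + -1 * u x)
    (hvc.add (continuousOn_const.mul huc)) (fun x hx => (hv₁ x hx).add ((hu₁ x hx).const_mul _))
    (fun x hx => (hd₂ x hx).differentiableAt) hd (by linarith) (by linarith) x hx]

theorem hasDerivAt_sin_two_mul (x : ℝ) :
    HasDerivAt (fun x => sin (2 * x)) (2 * cos (2 * x)) x := by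
  simpa [mul_comm] using ((hasDerivAt_id x).const_mul 2).sin

theorem hasDerivAt_cos_two_mul (x : ℝ) :
    HasDerivAt (fun x => cos (2 * x)) (-(2 * sin (2 * x))) x := by
  simpa [mul_comm] using ((hasDerivAt_id x).const_mul 2).cos

theorem sin_two_mul_pos {x : ℝ} (hx : x ∈ Ioo 0 (π / 2)) : 0 < sin (2 * x) :=
  sin_pos_of_pos_of_lt_pi (by linarith [hx.1]) (by linarith [hx.2, pi_pos])

theorem sin_nonneg_of_mem_Ioo {x : ℝ} (hx : x ∈ Ioo 0 (π / 2)) : 0 ≤ sin x :=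
  sin_nonneg_of_nonneg_of_le_pi hx.1.le (by linarith [hx.2, pi_pos])

theorem hasDerivAt_deriv_sin_two_mul (x : ℝ) :
    HasDerivAt (deriv fun x => sin (2 * x)) (-(4 * sin (2 * x))) x := by
  rw [funext fun x => (hasDerivAt_sin_two_mul x).deriv]
  exact ((hasDerivAt_cos_two_mul x).const_mul 2).congr_deriv (by ring)

theorem hasDerivAt_deriv_sin_two_mul_rpow {σ x : ℝ} (hx : 0 < sin (2 * x)) :
    HasDerivAt (deriv fun x => sin (2 * x) ^ σ)
      (σ * (σ - 1) * sin (2 * x) ^ (σ - 2) * (2 * cos (2 * x)) ^ 2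
        - 4 * σ * sin (2 * x) ^ σ) x := by
  have hev : (deriv fun x => sin (2 * x) ^ σ)
      =ᶠ[𝓝 x] fun y => 2 * cos (2 * y) * σ * sin (2 * y) ^ (σ - 1) := by
    filter_upwards [(continuous_sin.comp (continuous_const_mul 2)).continuousAt.eventually
      (lt_mem_nhds hx)] with y hy
    exact ((hasDerivAt_sin_two_mul y).rpow_const (Or.inl hy.ne')).deriv
  refine HasDerivAt.congr_of_eventuallyEq ?_ hev
  refine ((((hasDerivAt_cos_two_mul x).const_mul 2).mul_const σ).mul
    ((hasDerivAt_sin_two_mul x).rpow_const (p := σ - 1) (Or.inl hx.ne'))).congr_deriv ?_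
  rw [sub_sub, one_add_one_eq_two]
  have : sin (2 * x) ^ σ = sin (2 * x) ^ (σ - 1) * sin (2 * x) := by
    rw [← rpow_add_one hx.ne', sub_add_cancel]
  rw [this]
  ring

theorem exists_mul_le_mul_rpow {p K c : ℝ} (hp : p < 1) (hK : 0 < K) (hc : 0 < c) :
    ∃ ε > 0, ∀ y ∈ Ioc 0 ε, K * y ≤ c * y ^ p := by
  refine ⟨(c / K) ^ (1 - p)⁻¹, by positivity, fun y ⟨hy, hyε⟩ => ?_⟩
  have hyp : y ^ (1 - p) ≤ c / K := by
    calc y ^ (1 - p) ≤ ((c / K) ^ (1 - p)⁻¹) ^ (1 - p) := by gcongr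
      _ = c / K := by
        rw [← rpow_mul (by positivity), inv_mul_cancel₀ (by linarith), rpow_one]
  calc K * y = K * y ^ (1 - p) * y ^ p := by
        rw [mul_assoc, ← rpow_add hy, sub_add_cancel, rpow_one]
    _ ≤ K * (c / K) * y ^ p := by gcongr
    _ = c * y ^ p := by field_simp

theorem exists_sin_two_mul_subsolution {K p q c₁ c₂ : ℝ} (hK : 0 < K) (hp : p < 1) (hq : q ≤ 0)
    (hc₁ : 0 ≤ c₁) (hc₂ : 0 ≤ c₂) (hc : c₁ ≠ 0 ∨ c₂ ≠ 0) :
    ∃ a > 0, ∀ x ∈ Ioo 0 (π / 2),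
      K * (a * sin (2 * x)) ≤ c₁ * (a * sin (2 * x)) ^ p + c₂ * sin x * (a * sin (2 * x)) ^ q := by
  rcases hc with hc₁' | hc₂'
  · obtain ⟨a, ha, hle⟩ := exists_mul_le_mul_rpow hp hK (hc₁.lt_of_ne' hc₁')
    refine ⟨a, ha, fun x hx => ?_⟩
    have hs := sin_two_mul_pos hx
    have hsx := sin_nonneg_of_mem_Ioo hx
    have := hle (a * sin (2 * x)) ⟨by positivity, mul_le_of_le_one_right ha.le (sin_le_one _)⟩
    have : 0 ≤ c₂ * sin x * (a * sin (2 * x)) ^ q := by positivity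
    linarith
  -- `sin (2x) ≤ 2 sin x`: the factor `sin x` of the second term compensates its vanishing at `0`.
  · obtain ⟨a, ha, hle⟩ :=
      exists_mul_le_mul_rpow (hq.trans_lt one_pos) (mul_pos two_pos hK) (hc₂.lt_of_ne' hc₂')
    refine ⟨a, ha, fun x hx => ?_⟩
    have hs := sin_two_mul_pos hx
    have hsx := sin_nonneg_of_mem_Ioo hx
    have hsin : sin (2 * x) ≤ 2 * sin x := by
      rw [sin_two_mul]
      nlinarith [cos_le_one x]
    have hpow : a ^ q ≤ (a * sin (2 * x)) ^ q :=
      rpow_le_rpow_of_nonpos (by positivity) (mul_le_of_le_one_right ha.le (sin_le_one _)) hq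
    have : 0 ≤ c₁ * (a * sin (2 * x)) ^ p := by positivity
    calc K * (a * sin (2 * x)) ≤ K * a * (2 * sin x) := by rw [← mul_assoc]; gcongr
      _ = 2 * K * a * sin x := by ring
      _ ≤ c₂ * a ^ q * sin x := mul_le_mul_of_nonneg_right (hle a ⟨ha, le_rfl⟩) hsx
      _ ≤ c₂ * (a * sin (2 * x)) ^ q * sin x := by gcongr
      _ ≤ _ := by linarith

theorem mul_rpow_rpow_le_rpow {b y σ p r : ℝ} (hb : 1 ≤ b) (hy₀ : 0 < y) (hy₁ : y ≤ 1)
    (hp : p ≤ 0) (hr : r ≤ σ * p) : (b * y ^ σ) ^ p ≤ y ^ r := by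
  rw [mul_rpow (by positivity) (by positivity), ← rpow_mul hy₀.le]
  calc b ^ p * y ^ (σ * p) ≤ 1 * y ^ (σ * p) := by
        gcongr; exact rpow_le_one_of_one_le_of_nonpos hb hp
    _ ≤ y ^ r := by rw [one_mul]; exact rpow_le_rpow_of_exponent_ge hy₀ hy₁ hr

theorem min_mul_rpow_le {A B y c σ : ℝ} (hA : 0 ≤ A) (hy : 0 < y)
    (hyc : y ^ 2 + c ^ 2 = 1) :
    min A B * y ^ (σ - 2) ≤ A * y ^ (σ - 2) * (2 * c) ^ 2 + B * y ^ σ := by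
  have hsplit : y ^ σ = y ^ (σ - 2) * y ^ 2 := by
    rw [← rpow_natCast, ← rpow_add hy]
    norm_num
  have hmin : min A B ≤ 4 * A * c ^ 2 + B * y ^ 2 := by
    nlinarith [min_le_left A B, min_le_right A B, sq_nonneg c, sq_nonneg y]
  rw [hsplit]
  nlinarith [rpow_nonneg hy.le (σ - 2)]

theorem exists_rpow_sin_two_mul_supersolution {σ p q c₁ c₂ A B : ℝ} (hp : p ≤ 0) (hq : q ≤ 0)
    (hσp : σ - 2 ≤ σ * p) (hσq : σ - 2 ≤ σ * q) (hc₁ : 0 ≤ c₁) (hc₂ : 0 ≤ c₂)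
    (hA : 0 < A) (hB : 0 < B) :
    ∃ b > 0, ∀ x ∈ Ioo 0 (π / 2),
      c₁ * (b * sin (2 * x) ^ σ) ^ p + c₂ * sin x * (b * sin (2 * x) ^ σ) ^ q ≤
        b * (A * sin (2 * x) ^ (σ - 2) * (2 * cos (2 * x)) ^ 2 + B * sin (2 * x) ^ σ) := by
  set b := max 1 ((c₁ + c₂) / min A B)
  have hb : 1 ≤ b := le_max_left _ _
  have hbc : c₁ + c₂ ≤ b * min A B := (div_le_iff₀ (lt_min hA hB)).1 (le_max_right _ _)
  refine ⟨b, one_pos.trans_le hb, fun x hx => ?_⟩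
  have hs := sin_two_mul_pos hx
  have hs₁ := sin_le_one (2 * x)
  have hsx := sin_nonneg_of_mem_Ioo hx
  have hq' : sin x * (b * sin (2 * x) ^ σ) ^ q ≤ sin (2 * x) ^ (σ - 2) := by
    calc sin x * (b * sin (2 * x) ^ σ) ^ q ≤ 1 * (b * sin (2 * x) ^ σ) ^ q := by
          gcongr; exact sin_le_one x
      _ ≤ _ := by rw [one_mul]; exact mul_rpow_rpow_le_rpow hb hs hs₁ hq hσq
  calc c₁ * (b * sin (2 * x) ^ σ) ^ p + c₂ * sin x * (b * sin (2 * x) ^ σ) ^ q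
      ≤ c₁ * sin (2 * x) ^ (σ - 2) + c₂ * sin (2 * x) ^ (σ - 2) := by
        rw [mul_assoc c₂]
        gcongr
        exact mul_rpow_rpow_le_rpow hb hs hs₁ hp hσp
    _ = (c₁ + c₂) * sin (2 * x) ^ (σ - 2) := by ring
    _ ≤ b * (min A B * sin (2 * x) ^ (σ - 2)) := by
        rw [← mul_assoc]; gcongr
    _ ≤ _ := by
        gcongr
        exact min_mul_rpow_le hA.le hs (sin_sq_add_cos_sq _)

theorem antitoneOn_mul_rpow_add_mul_rpow {p q c₁ c₂ : ℝ} (hp : p ≤ 0) (hq : q ≤ 0)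
    (hc₁ : 0 ≤ c₁) (hc₂ : 0 ≤ c₂) : AntitoneOn (fun y => c₁ * y ^ p + c₂ * y ^ q) (Ioi 0) :=
  fun _ hy _ _ hyz => add_le_add
    (mul_le_mul_of_nonneg_left (rpow_le_rpow_of_nonpos hy hyz hp) hc₁)
    (mul_le_mul_of_nonneg_left (rpow_le_rpow_of_nonpos hy hyz hq) hc₂)

theorem one_add_div_nonpos {β t : ℝ} (hβ : β < 0) (ht : -β ≤ t) : 1 + t / β ≤ 0 := by
  have : t / β ≤ -1 := by rw [div_le_iff_of_neg hβ]; linarith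
  linarith

theorem sub_two_le_mul_one_add_div {β t σ : ℝ} (hβ : β < 0) (h : t * σ ≤ -2 * β) :
    σ - 2 ≤ σ * (1 + t / β) := by
  have : -2 ≤ t * σ / β := by rw [le_div_iff_of_neg hβ]; linarith
  linarith [show σ * (1 + t / β) = σ + t * σ / β by ring]

theorem mul_sin_two_mul_le_of_solution {k p q c₁ c₂ a : ℝ} (hk : k < 4) (hp : p ≤ 0)
    (hq : q ≤ 0) (hc₁ : 0 ≤ c₁) (hc₂ : 0 ≤ c₂)
    (ha : ∀ x ∈ Ioo 0 (π / 2), (4 - k) * (a * sin (2 * x)) ≤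
      c₁ * (a * sin (2 * x)) ^ p + c₂ * sin x * (a * sin (2 * x)) ^ q)
    {w : ℝ → ℝ} (hwc : ContinuousOn w (Icc 0 (π / 2)))
    (hw₁ : ∀ x ∈ Ioo 0 (π / 2), DifferentiableAt ℝ w x)
    (hw₂ : ∀ x ∈ Ioo 0 (π / 2), DifferentiableAt ℝ (deriv w) x)
    (hwpos : ∀ x ∈ Ioo 0 (π / 2), 0 < w x)
    (hw : ∀ x ∈ Ioo 0 (π / 2), -deriv (deriv w) x = k * w x + c₁ * w x ^ p + c₂ * sin x * w x ^ q)
    (hw0 : w 0 = 0) (hwπ : w (π / 2) = 0) :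
    ∀ x ∈ Icc 0 (π / 2), a * sin (2 * x) ≤ w x := by
  have hu₂ (x : ℝ) : HasDerivAt (deriv fun x => a * sin (2 * x)) (a * -(4 * sin (2 * x))) x := by
    rw [deriv_const_mul_field']
    exact (hasDerivAt_deriv_sin_two_mul x).const_mul a
  refine le_of_subsolution_of_supersolution hk (F := fun x y => c₁ * y ^ p + c₂ * sin x * y ^ q)
    (fun x hx => antitoneOn_mul_rpow_add_mul_rpow hp hq hc₁
      (mul_nonneg hc₂ (sin_nonneg_of_mem_Ioo hx)))
    (by fun_prop) (fun x _ => by fun_prop) (fun x _ => (hu₂ x).differentiableAt)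
    (fun x hx => ?_) hwc hw₁ hw₂ (fun x hx => by linarith [hw x hx]) hwpos (by simp [hw0]) ?_
  · rw [(hu₂ x).deriv]
    linarith [ha x hx]
  · rw [hwπ, mul_div_cancel₀ _ two_ne_zero, sin_pi, mul_zero]

theorem le_mul_rpow_sin_two_mul_of_solution {k p q c₁ c₂ σ b : ℝ} (hk : k < 4) (hp : p ≤ 0)
    (hq : q ≤ 0) (hc₁ : 0 ≤ c₁) (hc₂ : 0 ≤ c₂) (hσ : 0 < σ) (hb : 0 < b)
    (hb' : ∀ x ∈ Ioo 0 (π / 2),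
      c₁ * (b * sin (2 * x) ^ σ) ^ p + c₂ * sin x * (b * sin (2 * x) ^ σ) ^ q ≤
        b * (σ * (1 - σ) * sin (2 * x) ^ (σ - 2) * (2 * cos (2 * x)) ^ 2
          + (4 * σ - k) * sin (2 * x) ^ σ))
    {w : ℝ → ℝ} (hwc : ContinuousOn w (Icc 0 (π / 2)))
    (hw₁ : ∀ x ∈ Ioo 0 (π / 2), DifferentiableAt ℝ w x)
    (hw₂ : ∀ x ∈ Ioo 0 (π / 2), DifferentiableAt ℝ (deriv w) x)
    (hw : ∀ x ∈ Ioo 0 (π / 2), -deriv (deriv w) x = k * w x + c₁ * w x ^ p + c₂ * sin x * w x ^ q)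
    (hw0 : w 0 = 0) (hwπ : w (π / 2) = 0) :
    ∀ x ∈ Icc 0 (π / 2), w x ≤ b * sin (2 * x) ^ σ := by
  have hv₂ {x : ℝ} (hx : x ∈ Ioo 0 (π / 2)) := by
    have := (hasDerivAt_deriv_sin_two_mul_rpow (σ := σ) (sin_two_mul_pos hx)).const_mul b
    rwa [← deriv_const_mul_field'] at this
  refine le_of_subsolution_of_supersolution hk (F := fun x y => c₁ * y ^ p + c₂ * sin x * y ^ q)
    (fun x hx => antitoneOn_mul_rpow_add_mul_rpow hp hq hc₁
      (mul_nonneg hc₂ (sin_nonneg_of_mem_Ioo hx)))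
    hwc hw₁ hw₂ (fun x hx => by linarith [hw x hx]) ?_
    (fun x hx => ?_) (fun x hx => (hv₂ hx).differentiableAt) (fun x hx => ?_)
    (fun x hx => by have := sin_two_mul_pos hx; positivity) ?_ ?_
  · exact continuousOn_const.mul <|
      (continuous_sin.comp (continuous_const_mul 2)).continuousOn.rpow_const fun _ _ => Or.inr hσ.le
  · exact ((hasDerivAt_sin_two_mul x).rpow_const
      (Or.inl (sin_two_mul_pos hx).ne')).differentiableAt.const_mul b
  · rw [(hv₂ hx).deriv]
    linarith [hb' x hx]
  · simp [hw0, zero_rpow hσ.ne']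
  · rw [hwπ, mul_div_cancel₀ _ two_ne_zero, sin_pi, zero_rpow hσ.ne', mul_zero]

/-- A priori sandwich bound: for `-2 < β < 0`, `c₁, c₂ ≥ 0` not both zero,
`s = -1-2/β`, `s' = -1-3/β`, and `σ ≠ 1` with `β²/4 < σ ≤ min{1, -2β/3}`, there are
constants `a, b > 0` (independent of `w`) such that every positive solution
`w ∈ C²(0,π/2) ∩ C[0,π/2]` of `-w'' = β²w + c₁w^{-s} + c₂ sin φ w^{-s'}` with
`w(0) = w(π/2) = 0` satisfies `a sin 2φ ≤ w(φ) ≤ b (sin 2φ)^σ` on `(0,π/2)`.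
(Note `-s = 1+2/β`, `-s' = 1+3/β`.) -/
theorem apriori_sandwich (β c1 c2 σ : ℝ) (hβ1 : -2 < β) (hβ2 : β < 0)
    (hc1 : 0 ≤ c1) (hc2 : 0 ≤ c2) (hc : c1 ≠ 0 ∨ c2 ≠ 0)
    (hσ1 : β ^ 2 / 4 < σ) (hσ2 : σ ≤ min 1 (-2*β/3)) (hσ3 : σ ≠ 1) :
    ∃ a > (0:ℝ), ∃ b > (0:ℝ), ∀ w : ℝ → ℝ,
      ContinuousOn w (Set.Icc 0 (Real.pi/2)) →
      (∀ φ ∈ Set.Ioo (0:ℝ) (Real.pi/2), DifferentiableAt ℝ w φ) →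
      (∀ φ ∈ Set.Ioo (0:ℝ) (Real.pi/2), DifferentiableAt ℝ (deriv w) φ) →
      (∀ φ ∈ Set.Ioo (0:ℝ) (Real.pi/2), 0 < w φ) →
      (∀ φ ∈ Set.Ioo (0:ℝ) (Real.pi/2),
        -(deriv (deriv w) φ) = β ^ 2 * w φ + c1 * w φ ^ (1 + 2/β)
          + c2 * Real.sin φ * w φ ^ (1 + 3/β)) →
      w 0 = 0 → w (Real.pi/2) = 0 →
      ∀ φ ∈ Set.Ioo (0:ℝ) (Real.pi/2),
        a * Real.sin (2*φ) ≤ w φ ∧ w φ ≤ b * Real.sin (2*φ) ^ σ := by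
  have hβ4 : β ^ 2 < 4 := by nlinarith
  have hσ0 : 0 < σ := by nlinarith
  have hσ_lt : σ < 1 := lt_of_le_of_ne (hσ2.trans (min_le_left _ _)) hσ3
  have hσβ : σ ≤ -2 * β / 3 := hσ2.trans (min_le_right _ _)
  have hp : 1 + 2 / β ≤ 0 := one_add_div_nonpos hβ2 (by linarith)
  have hq : 1 + 3 / β ≤ 0 := one_add_div_nonpos hβ2 (by linarith)
  have hσp : σ - 2 ≤ σ * (1 + 2 / β) := sub_two_le_mul_one_add_div hβ2 (by linarith)
  have hσq : σ - 2 ≤ σ * (1 + 3 / β) := sub_two_le_mul_one_add_div hβ2 (by linarith)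
  obtain ⟨a, ha, hsub⟩ := exists_sin_two_mul_subsolution (K := 4 - β ^ 2) (by linarith)
    (hp.trans_lt one_pos) hq hc1 hc2 hc
  obtain ⟨b, hb, hsup⟩ := exists_rpow_sin_two_mul_supersolution (A := σ * (1 - σ))
    (B := 4 * σ - β ^ 2) hp hq hσp hσq hc1 hc2 (by nlinarith) (by linarith)
  refine ⟨a, ha, b, hb, fun w hwc hw₁ hw₂ hwpos hw hw0 hwπ φ hφ => ⟨?_, ?_⟩⟩
  · exact mul_sin_two_mul_le_of_solution hβ4 hp hq hc1 hc2 hsub hwc hw₁ hw₂ hwpos hw hw0 hwπ φ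
      (Ioo_subset_Icc_self hφ)
  · exact le_mul_rpow_sin_two_mul_of_solution hβ4 hp hq hc1 hc2 hσ0 hb hsup hwc hw₁ hw₂ hw hw0
      hwπ φ (Ioo_subset_Icc_self hφ)
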